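/- Let DB be a finite uncertain database whose events take nonnegative values. For any patterns α and β, expSup_DB(α ++ β) ≤ maxPr_DB(α) · expSup_DB(β), where α ++ β denotes concatenation of the lists of events. -/

import Mathlib

open scoped Classical

noncomputable section

variable {I : Type*}

/-- `js` is an occurrence of pattern `α` in uncertain sequence `S`:
a strictly increasing list of 1-based positions `1 ≤ j₁ < ⋯ < jₘ ≤ n`. -/
def IsOcc (S : List (I → ℝ)) (α : List (Finset I)) (js : List ℕ) : Prop :=
  js.length = α.length ∧ List.Pairwise (· < ·) js ∧ ∀ j ∈ js, 1 ≤ j ∧ j ≤ S.length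

/-- The probability of the occurrence `js` of pattern `α` in `S`:
`∏ₖ ∏_{i ∈ eₖ} p_{jₖ}(i)`. -/
def occProb (S : List (I → ℝ)) (α : List (Finset I)) (js : List ℕ) : ℝ :=
  ((α.zip js).map fun ej => ∏ i ∈ ej.1, S.getD (ej.2 - 1) (fun _ => (0 : ℝ)) i).prod

/-- `maxPr_S(α)`: the maximum occurrence probability of `α` in `S`
(`0` if there is no occurrence, since `sSup ∅ = 0` in `ℝ`; `1` for the empty pattern). -/
def maxPr (S : List (I → ℝ)) (α : List (Finset I)) : ℝ :=
  sSup {x : ℝ | ∃ js, IsOcc S α js ∧ occProb S α js = x}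

/-- `α ⊑ α'`: there are positions `j₁ < ⋯ < jₘ` in `α'` with `eₖ ⊆ e'_{jₖ}` for all `k`. -/
def IsSubpattern (α α' : List (Finset I)) : Prop :=
  ∃ β : List (Finset I), List.Forall₂ (· ⊆ ·) α β ∧ β.Sublist α'

/-- Expected support of `α` in a database `DB`. -/
def expSup (DB : List (List (I → ℝ))) (α : List (Finset I)) : ℝ :=
  (DB.map fun S => maxPr S α).sum

/-- `maxPr_DB(α) = max_{S ∈ DB} maxPr_S(α)`, `0` for an empty database. -/
def maxPrDB (DB : List (List (I → ℝ))) (α : List (Finset I)) : ℝ :=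
  (DB.map fun S => maxPr S α).foldr max 0

/-- `expSup^cap_DB(β ++ ⟨{i}⟩) = maxPr_DB(β) · Σ_{S ∈ DB} maxPr_S(⟨{i}⟩)`. -/
def expSupCap (DB : List (List (I → ℝ))) (β : List (Finset I)) (i : I) : ℝ :=
  maxPrDB DB β * expSup DB [{i}]

/-- Support count of item `i`: the number of sequences `S ∈ DB` with `maxPr_S(⟨{i}⟩) > 0`. -/
def supCount (DB : List (List (I → ℝ))) (i : I) : ℕ :=
  (DB.filter fun S => decide (0 < maxPr S [({i} : Finset I)])).length

/-- The set of items occurring in a pattern. -/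
def pItems (α : List (Finset I)) : Finset I :=
  α.foldr (· ∪ ·) ∅

/-- The size of a pattern: total number of items counted across events. -/
def pSize (α : List (Finset I)) : ℕ :=
  (α.map Finset.card).sum

/-- `sWeight(α)`: the sum of the weights of all items of `α` divided by its size. -/
def sWeight (w : I → ℝ) (α : List (Finset I)) : ℝ :=
  (α.map fun e => ∑ i ∈ e, w i).sum / (pSize α : ℝ)

/-- `wgt^cap_F(α)`: the maximum of `w` over `F ∪ items(α)`. -/
def wgtCap (w : I → ℝ) (F : Finset I) (α : List (Finset I)) : ℝ :=
  (F ∪ pItems α).fold max 0 w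

/-- Weighted expected support: `WES_DB(α) = expSup_DB(α) · sWeight(α)`. -/
def WES (DB : List (List (I → ℝ))) (w : I → ℝ) (α : List (Finset I)) : ℝ :=
  expSup DB α * sWeight w α

/-- The SupCalc array `g_{S,α}(m)`: for nonempty `α`, the maximum probability of an
occurrence of `α` in `S` whose last position is `m` (`0` if none, in particular for `m = 0`);
for the empty pattern it is `1`. -/
def gArr (S : List (I → ℝ)) (α : List (Finset I)) (m : ℕ) : ℝ :=
  if α = [] then 1
  else sSup {x : ℝ | ∃ js, IsOcc S α js ∧ js.getLast? = some m ∧ occProb S α js = x}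


private lemma occProb_nonneg' (S : List (I → ℝ)) (hS : ∀ p ∈ S, ∀ i : I, 0 ≤ p i)
    (α : List (Finset I)) (js : List ℕ) : 0 ≤ occProb S α js := by
  apply List.prod_nonneg
  intro x hx
  simp only [List.mem_map] at hx
  obtain ⟨ej, _, rfl⟩ := hx
  apply Finset.prod_nonneg
  intro i _
  by_cases h : ej.2 - 1 < S.length
  · rw [List.getD_eq_getElem _ _ h]
    exact hS _ (List.getElem_mem _) i
  · rw [List.getD_eq_default _ _ (le_of_not_gt h)]

private lemma maxPr_set_finite' (S : List (I → ℝ)) (α : List (Finset I)) :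
    {x : ℝ | ∃ js, IsOcc S α js ∧ occProb S α js = x}.Finite := by
  have hsub : {x : ℝ | ∃ js, IsOcc S α js ∧ occProb S α js = x}
      ⊆ (occProb S α) '' {js | js ∈ (List.range' 1 S.length).sublists} := by
    rintro x ⟨js, ⟨hlen, hsort, hmem⟩, rfl⟩
    refine ⟨js, ?_, rfl⟩
    simp only [Set.mem_setOf_eq, List.mem_sublists]
    apply List.sublist_of_subperm_of_pairwise _ hsort (List.pairwise_lt_range' ..)
    apply List.subperm_of_subset hsort.nodup
    intro j hj
    rw [List.mem_range'_1]
    exact ⟨(hmem j hj).1, by have := (hmem j hj).2; omega⟩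
  exact Set.Finite.subset (Set.Finite.image _ (List.finite_toSet _)) hsub

private lemma maxPr_nonneg' (S : List (I → ℝ)) (hS : ∀ p ∈ S, ∀ i : I, 0 ≤ p i)
    (α : List (Finset I)) : 0 ≤ maxPr S α := by
  apply Real.sSup_nonneg
  rintro x ⟨js, _, rfl⟩
  exact occProb_nonneg' S hS α js

private lemma maxPr_append_le' (S : List (I → ℝ)) (hS : ∀ p ∈ S, ∀ i : I, 0 ≤ p i)
    (α β : List (Finset I)) : maxPr S (α ++ β) ≤ maxPr S α * maxPr S β := by
  have h0α := maxPr_nonneg' S hS α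
  have h0β := maxPr_nonneg' S hS β
  apply Real.sSup_le _ (mul_nonneg h0α h0β)
  rintro x ⟨js, ⟨hlen, hsort, hmem⟩, rfl⟩
  set js₁ := js.take α.length with hjs1
  set js₂ := js.drop α.length with hjs2
  have hjs : js = js₁ ++ js₂ := (List.take_append_drop _ _).symm
  have hlen1 : js₁.length = α.length := by
    rw [hjs1, List.length_take, hlen, List.length_append]; omega
  have hocc1 : IsOcc S α js₁ :=
    ⟨hlen1, hsort.sublist (List.take_sublist _ _),
      fun j hj => hmem j ((List.take_sublist _ _).subset hj)⟩
  have hlen2 : js₂.length = β.length := by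
    rw [hjs2, List.length_drop, hlen, List.length_append]; omega
  have hocc2 : IsOcc S β js₂ :=
    ⟨hlen2, hsort.sublist (List.drop_sublist _ _),
      fun j hj => hmem j ((List.drop_sublist _ _).subset hj)⟩
  have hsplit : occProb S (α ++ β) js = occProb S α js₁ * occProb S β js₂ := by
    unfold occProb
    rw [hjs, List.zip_append hlen1.symm, List.map_append, List.prod_append]
  rw [hsplit]
  exact mul_le_mul
    (le_csSup (maxPr_set_finite' S α).bddAbove ⟨js₁, hocc1, rfl⟩)
    (le_csSup (maxPr_set_finite' S β).bddAbove ⟨js₂, hocc2, rfl⟩)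
    (occProb_nonneg' S hS β js₂) h0α

private lemma le_maxPrDB' (DB : List (List (I → ℝ))) (α : List (Finset I))
    {S : List (I → ℝ)} (hS : S ∈ DB) : maxPr S α ≤ maxPrDB DB α := by
  unfold maxPrDB
  induction DB with
  | nil => simp at hS
  | cons T DB ih =>
    rcases List.mem_cons.mp hS with rfl | h
    · exact le_max_left _ _
    · exact (ih h).trans (le_max_right _ _)

/-- `expSup_DB(α ++ β) ≤ maxPr_DB(α) · expSup_DB(β)`
for a database with nonnegative values. -/
theorem expSup_append_le
    (DB : List (List (I → ℝ)))
    (hDB : ∀ S ∈ DB, ∀ p ∈ S, ∀ i : I, 0 ≤ p i)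
    (α β : List (Finset I)) :
    expSup DB (α ++ β) ≤ maxPrDB DB α * expSup DB β := by
  unfold expSup
  have key : ∀ S ∈ DB, maxPr S (α ++ β) ≤ maxPrDB DB α * maxPr S β := by
    intro S hS
    exact (maxPr_append_le' S (hDB S hS) α β).trans
      (mul_le_mul_of_nonneg_right (le_maxPrDB' DB α hS) (maxPr_nonneg' S (hDB S hS) β))
  calc (DB.map fun S => maxPr S (α ++ β)).sum
      ≤ (DB.map fun S => maxPrDB DB α * maxPr S β).sum := by
        apply List.sum_le_sum
        intro S hS
        exact key S hS
    _ = maxPrDB DB α * (DB.map fun S => maxPr S β).sum := by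
        clear key hDB
        generalize maxPrDB DB α = c
        induction DB with
        | nil => simp
        | cons T DB ih => simp_all [mul_add]
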